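/- Let r : E₁ → ℝ and s : E₂ → ℝ be differentiable and 1-strongly convex. Let F : E₁ → ℝ and H : E₂ → ℝ be convex functions admitting a subgradient at every point, with F relatively μx-strongly convex with respect to V^r and H relatively μy-strongly convex with respect to V^s, where μx, μy > 0. Let A : E₁ → E₂ be a bounded linear operator, define φ(x,y) := F(x) + ⟨y, A x⟩ − H(y), and let (x*, y*) be a saddle point of φ on E₁ × E₂. Fix ηx, ηy > 0 and points x₀ ∈ E₁, y₀ ∈ E₂. Suppose x₁ and y₁ satisfy the implicit proximal point step: x₁ is a global minimizer of x ↦ ⟨Aᵀ y₁, x⟩ + (1/ηx) V^r_{x₀}(x) + F(x), and y₁ is a global minimizer of y ↦ −⟨A x₁, y⟩ + (1/ηy) V^s_{y₀}(y) + H(y). Then 0 ≤ φ(x₁, y*) − φ(x*, y₁) ≤ (1/ηx) V^r_{x₀}(x*) − (1/ηx + μx) V^r_{x₁}(x*) + (1/ηy) V^s_{y₀}(y*) − (1/ηy + μy) V^s_{y₁}(y*). -/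

import Mathlib

/-!
Optimality of `x₁` for its proximal subproblem makes `-(Aᵀy₁ + (∇r(x₁) - ∇r(x₀))/ηx)` a
subgradient of `F` at `x₁`. Relative strong convexity of `F` at this subgradient, together with
the three-point identity `⟨∇r(x₁) - ∇r(x₀), z - x₁⟩ = V_{x₀}(z) - V_{x₁}(z) - V_{x₀}(x₁)` and
`V_{x₀}(x₁) ≥ 0`, bounds `F(x₁) - F(x*) + ⟨y₁, A(x₁ - x*)⟩`; symmetrically for `H` and `y₁`.
Adding the two bounds cancels the coupling term `⟨y₁, Ax₁⟩` and leaves `φ(x₁, y*) - φ(x*, y₁)`,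
which is nonnegative because `(x*, y*)` is a saddle point.
-/

open Filter Topology Set

/-- Bregman divergence V^r_x(x') = r(x') − r(x) − ⟨∇r(x), x' − x⟩,
given a gradient function `r'` for `r`. -/
noncomputable def breg {E : Type*} [NormedAddCommGroup E] [InnerProductSpace ℝ E]
    (r : E → ℝ) (r' : E → E) (x x' : E) : ℝ :=
  r x' - r x - (inner ℝ (r' x) (x' - x) : ℝ)

open InnerProductSpace
open scoped RealInnerProductSpace

section Convexity

variable {E : Type*} [NormedAddCommGroup E] [InnerProductSpace ℝ E]

def HasSubgradientAt (f : E → ℝ) (g x : E) : Prop :=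
  ∀ z, f x + ⟪g, z - x⟫ ≤ f z

lemma le_of_hasDerivAt_zero_of_sub_le_mul {f : ℝ → ℝ} {d c : ℝ} (hf : HasDerivAt f d 0)
    (h : ∀ t ∈ Ioo (0 : ℝ) 1, f t - f 0 ≤ t * c) : d ≤ c := by
  have hslope : Tendsto (fun t => t⁻¹ * (f t - f 0)) (𝓝[>] 0) (𝓝 d) := by
    simpa [slope_def_field, div_eq_inv_mul] using hf.tendsto_slope_zero_right
  refine le_of_tendsto hslope ?_
  filter_upwards [Ioo_mem_nhdsGT (zero_lt_one' ℝ)] with t ht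
  rw [inv_mul_le_iff₀ ht.1]
  exact h t ht

lemma ConvexOn.apply_add_smul_sub_sub_le {F : E → ℝ} (hF : ConvexOn ℝ univ F) (x z : E)
    {t : ℝ} (ht : t ∈ Icc (0 : ℝ) 1) : F (x + t • (z - x)) - F x ≤ t * (F z - F x) := by
  have h := hF.2 (mem_univ x) (mem_univ z) (sub_nonneg.2 ht.2) ht.1 (sub_add_cancel 1 t)
  have hpt : (1 - t) • x + t • z = x + t • (z - x) := by
    rw [smul_sub, sub_smul, one_smul]; abel
  rw [hpt, smul_eq_mul, smul_eq_mul] at h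
  linarith

variable [CompleteSpace E]

lemma HasGradientAt.hasDerivAt_add_smul {f : E → ℝ} {g x : E} (hf : HasGradientAt f g x)
    (v : E) : HasDerivAt (fun t : ℝ => f (x + t • v)) ⟪g, v⟫ 0 := by
  simpa [HasLineDerivAt, toDual_apply_apply] using
    hf.hasFDerivAt.hasLineDerivAt v

lemma ConvexOn.hasSubgradientAt_of_hasGradientAt {f : E → ℝ} {g x : E}
    (hf : ConvexOn ℝ univ f) (hg : HasGradientAt f g x) : HasSubgradientAt f g x := by
  intro z
  have := le_of_hasDerivAt_zero_of_sub_le_mul (hg.hasDerivAt_add_smul (z - x))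
    fun t ht => by simpa using hf.apply_add_smul_sub_sub_le x z (Ioo_subset_Icc_self ht)
  linarith

lemma ConvexOn.hasSubgradientAt_neg_of_forall_add_le {φ F : E → ℝ} {g x : E}
    (hF : ConvexOn ℝ univ F) (hφ : HasGradientAt φ g x)
    (hmin : ∀ z, φ x + F x ≤ φ z + F z) : HasSubgradientAt F (-g) x := by
  intro z
  have := le_of_hasDerivAt_zero_of_sub_le_mul (c := F z - F x)
    (hφ.hasDerivAt_add_smul (z - x)).neg
    fun t ht => by
      have hconv := hF.apply_add_smul_sub_sub_le x z (Ioo_subset_Icc_self ht)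
      have := hmin (x + t • (z - x))
      simp only [Pi.neg_apply, zero_smul, add_zero]
      linarith
  rw [inner_neg_left]
  linarith

end Convexity

section Bregman

variable {E : Type*} [NormedAddCommGroup E] [InnerProductSpace ℝ E]

lemma breg_three_point (r : E → ℝ) (r' : E → E) (x₀ x₁ z : E) :
    ⟪r' x₁ - r' x₀, z - x₁⟫ = breg r r' x₀ z - breg r r' x₁ z - breg r r' x₀ x₁ := by
  simp only [breg, inner_sub_left, inner_sub_right]
  ring

variable [CompleteSpace E] {r : E → ℝ} {r' : E → E}

lemma breg_nonneg (hr : ConvexOn ℝ univ r) (hr' : ∀ x, HasGradientAt r (r' x) x) (x z : E) :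
    0 ≤ breg r r' x z := by
  have := hr.hasSubgradientAt_of_hasGradientAt (hr' x) z
  rw [breg]
  linarith

lemma hasGradientAt_inner_add_mul_breg (hr' : ∀ x, HasGradientAt r (r' x) x)
    (a x₀ x : E) (c : ℝ) :
    HasGradientAt (fun z => ⟪a, z⟫ + c * breg r r' x₀ z) (a + c • (r' x - r' x₀)) x := by
  have hbreg : HasFDerivAt (breg r r' x₀) (toDual ℝ E (r' x) - toDual ℝ E (r' x₀)) x :=
    (((hr' x).hasFDerivAt.sub_const (r x₀)).sub
      ((toDual ℝ E (r' x₀)).hasFDerivAt.comp x ((hasFDerivAt_id x).sub_const x₀)))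
  -- `toDual ℝ E a` is `⟪a, ·⟫` definitionally
  have h : HasFDerivAt (fun z => ⟪a, z⟫ + c * breg r r' x₀ z)
      (toDual ℝ E a + c • (toDual ℝ E (r' x) - toDual ℝ E (r' x₀))) x :=
    (toDual ℝ E a).hasFDerivAt.add (hbreg.const_mul c)
  rw [hasGradientAt_iff_hasFDerivAt, map_add, map_smulₛₗ, conj_trivial, map_sub]
  exact h

lemma breg_prox_step_le {F : E → ℝ} {μ η : ℝ} {a x₀ x₁ z : E}
    (hr : ConvexOn ℝ univ r) (hr' : ∀ x, HasGradientAt r (r' x) x) (hF : ConvexOn ℝ univ F)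
    (hFrel : ∀ g, HasSubgradientAt F g x₁ → F x₁ + ⟪g, z - x₁⟫ + μ * breg r r' x₁ z ≤ F z)
    (hη : 0 < η)
    (hmin : ∀ x, ⟪a, x₁⟫ + 1 / η * breg r r' x₀ x₁ + F x₁ ≤ ⟪a, x⟫ + 1 / η * breg r r' x₀ x + F x) :
    F x₁ - F z + ⟪a, x₁ - z⟫ ≤ 1 / η * breg r r' x₀ z - (1 / η + μ) * breg r r' x₁ z := by
  have hsub := hF.hasSubgradientAt_neg_of_forall_add_le
    (hasGradientAt_inner_add_mul_breg hr' a x₀ x₁ (1 / η)) fun x => by linarith [hmin x]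
  have hrel := hFrel _ hsub
  have hthree_point := breg_three_point r r' x₀ x₁ z
  have hprox_nonneg : 0 ≤ 1 / η * breg r r' x₀ x₁ := mul_nonneg (by positivity) (breg_nonneg hr hr' x₀ x₁)
  rw [inner_neg_left, inner_add_left, real_inner_smul_left, hthree_point] at hrel
  rw [inner_sub_right] at hrel ⊢
  linarith

end Bregman

theorem stmt1_general {E₁ E₂ : Type*}
    [NormedAddCommGroup E₁] [InnerProductSpace ℝ E₁] [CompleteSpace E₁]
    [NormedAddCommGroup E₂] [InnerProductSpace ℝ E₂] [CompleteSpace E₂]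
    (r : E₁ → ℝ) (r' : E₁ → E₁) (s : E₂ → ℝ) (s' : E₂ → E₂)
    (hrgrad : ∀ x, HasGradientAt r (r' x) x)
    (hsgrad : ∀ y, HasGradientAt s (s' y) y)
    (hrsc : ConvexOn ℝ Set.univ (fun x => r x - 1 / 2 * ‖x‖ ^ 2))
    (hssc : ConvexOn ℝ Set.univ (fun y => s y - 1 / 2 * ‖y‖ ^ 2))
    (F : E₁ → ℝ) (H : E₂ → ℝ) (μx μy : ℝ)
    (hFconv : ConvexOn ℝ Set.univ F) (hHconv : ConvexOn ℝ Set.univ H)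
    (hFrel : ∀ x x' : E₁, ∀ g : E₁, (∀ z, F x + (inner ℝ g (z - x) : ℝ) ≤ F z) →
      F x + (inner ℝ g (x' - x) : ℝ) + μx * breg r r' x x' ≤ F x')
    (hHrel : ∀ y y' : E₂, ∀ g : E₂, (∀ z, H y + (inner ℝ g (z - y) : ℝ) ≤ H z) →
      H y + (inner ℝ g (y' - y) : ℝ) + μy * breg s s' y y' ≤ H y')
    (A : E₁ →L[ℝ] E₂) (xstar : E₁) (ystar : E₂)
    (hsaddle : ∀ (x : E₁) (y : E₂),
      F xstar + (inner ℝ y (A xstar) : ℝ) - H y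
          ≤ F xstar + (inner ℝ ystar (A xstar) : ℝ) - H ystar ∧
      F xstar + (inner ℝ ystar (A xstar) : ℝ) - H ystar
          ≤ F x + (inner ℝ ystar (A x) : ℝ) - H ystar)
    (ηx ηy : ℝ) (hηx : 0 < ηx) (hηy : 0 < ηy)
    (x₀ : E₁) (y₀ : E₂) (x₁ : E₁) (y₁ : E₂)
    (hxmin : ∀ z : E₁,
      (inner ℝ ((ContinuousLinearMap.adjoint A) y₁) x₁ : ℝ)
          + 1 / ηx * breg r r' x₀ x₁ + F x₁
        ≤ (inner ℝ ((ContinuousLinearMap.adjoint A) y₁) z : ℝ)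
          + 1 / ηx * breg r r' x₀ z + F z)
    (hymin : ∀ w : E₂,
      -(inner ℝ (A x₁) y₁ : ℝ) + 1 / ηy * breg s s' y₀ y₁ + H y₁
        ≤ -(inner ℝ (A x₁) w : ℝ) + 1 / ηy * breg s s' y₀ w + H w) :
    0 ≤ (F x₁ + (inner ℝ ystar (A x₁) : ℝ) - H ystar)
        - (F xstar + (inner ℝ y₁ (A xstar) : ℝ) - H y₁) ∧
    (F x₁ + (inner ℝ ystar (A x₁) : ℝ) - H ystar)
        - (F xstar + (inner ℝ y₁ (A xstar) : ℝ) - H y₁)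
      ≤ 1 / ηx * breg r r' x₀ xstar - (1 / ηx + μx) * breg r r' x₁ xstar
        + 1 / ηy * breg s s' y₀ ystar - (1 / ηy + μy) * breg s s' y₁ ystar := by
  have hr : ConvexOn ℝ univ r := (strongConvexOn_iff_convex.2 hrsc).convexOn fun _ => by positivity
  have hs : ConvexOn ℝ univ s := (strongConvexOn_iff_convex.2 hssc).convexOn fun _ => by positivity
  have hx := breg_prox_step_le hr hrgrad hFconv (hFrel x₁ xstar) hηx hxmin
  have hy := breg_prox_step_le (a := -A x₁) hs hsgrad hHconv (hHrel y₁ ystar) hηy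
    fun w => by simpa only [inner_neg_left] using hymin w
  rw [ContinuousLinearMap.adjoint_inner_left, map_sub, inner_sub_right] at hx
  rw [inner_neg_left, inner_sub_right, real_inner_comm y₁ (A x₁),
    real_inner_comm ystar (A x₁)] at hy
  obtain ⟨hmax_y, hmin_x⟩ := hsaddle x₁ y₁
  constructor <;> linarith

/-- one-step inequality for the implicit proximal point update on
the bilinearly coupled minimax problem min_x max_y φ(x,y) = F(x) + ⟨y, Ax⟩ − H(y). -/
theorem stmt1 {E₁ E₂ : Type*}
    [NormedAddCommGroup E₁] [InnerProductSpace ℝ E₁] [CompleteSpace E₁]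
    [NormedAddCommGroup E₂] [InnerProductSpace ℝ E₂] [CompleteSpace E₂]
    (r : E₁ → ℝ) (r' : E₁ → E₁) (s : E₂ → ℝ) (s' : E₂ → E₂)
    (hrgrad : ∀ x, HasGradientAt r (r' x) x)
    (hsgrad : ∀ y, HasGradientAt s (s' y) y)
    (hrsc : ConvexOn ℝ Set.univ (fun x => r x - 1 / 2 * ‖x‖ ^ 2))
    (hssc : ConvexOn ℝ Set.univ (fun y => s y - 1 / 2 * ‖y‖ ^ 2))
    (F : E₁ → ℝ) (H : E₂ → ℝ) (μx μy : ℝ) (hμx : 0 < μx) (hμy : 0 < μy)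
    (hFconv : ConvexOn ℝ Set.univ F) (hHconv : ConvexOn ℝ Set.univ H)
    (hFsub : ∀ x : E₁, ∃ g : E₁, ∀ z, F x + (inner ℝ g (z - x) : ℝ) ≤ F z)
    (hHsub : ∀ y : E₂, ∃ g : E₂, ∀ z, H y + (inner ℝ g (z - y) : ℝ) ≤ H z)
    (hFrel : ∀ x x' : E₁, ∀ g : E₁, (∀ z, F x + (inner ℝ g (z - x) : ℝ) ≤ F z) →
      F x + (inner ℝ g (x' - x) : ℝ) + μx * breg r r' x x' ≤ F x')
    (hHrel : ∀ y y' : E₂, ∀ g : E₂, (∀ z, H y + (inner ℝ g (z - y) : ℝ) ≤ H z) →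
      H y + (inner ℝ g (y' - y) : ℝ) + μy * breg s s' y y' ≤ H y')
    (A : E₁ →L[ℝ] E₂) (xstar : E₁) (ystar : E₂)
    (hsaddle : ∀ (x : E₁) (y : E₂),
      F xstar + (inner ℝ y (A xstar) : ℝ) - H y
          ≤ F xstar + (inner ℝ ystar (A xstar) : ℝ) - H ystar ∧
      F xstar + (inner ℝ ystar (A xstar) : ℝ) - H ystar
          ≤ F x + (inner ℝ ystar (A x) : ℝ) - H ystar)
    (ηx ηy : ℝ) (hηx : 0 < ηx) (hηy : 0 < ηy)
    (x₀ : E₁) (y₀ : E₂) (x₁ : E₁) (y₁ : E₂)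
    (hxmin : ∀ z : E₁,
      (inner ℝ ((ContinuousLinearMap.adjoint A) y₁) x₁ : ℝ)
          + 1 / ηx * breg r r' x₀ x₁ + F x₁
        ≤ (inner ℝ ((ContinuousLinearMap.adjoint A) y₁) z : ℝ)
          + 1 / ηx * breg r r' x₀ z + F z)
    (hymin : ∀ w : E₂,
      -(inner ℝ (A x₁) y₁ : ℝ) + 1 / ηy * breg s s' y₀ y₁ + H y₁
        ≤ -(inner ℝ (A x₁) w : ℝ) + 1 / ηy * breg s s' y₀ w + H w) :
    0 ≤ (F x₁ + (inner ℝ ystar (A x₁) : ℝ) - H ystar)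
        - (F xstar + (inner ℝ y₁ (A xstar) : ℝ) - H y₁) ∧
    (F x₁ + (inner ℝ ystar (A x₁) : ℝ) - H ystar)
        - (F xstar + (inner ℝ y₁ (A xstar) : ℝ) - H y₁)
      ≤ 1 / ηx * breg r r' x₀ xstar - (1 / ηx + μx) * breg r r' x₁ xstar
        + 1 / ηy * breg s s' y₀ ystar - (1 / ηy + μy) * breg s s' y₁ ystar :=
  stmt1_general r r' s s' hrgrad hsgrad hrsc hssc F H μx μy hFconv hHconv hFrel hHrel A xstar ystar
    hsaddle ηx ηy hηx hηy x₀ y₀ x₁ y₁ hxmin hymin
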